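/- Let α be a family of pairwise edge-disjoint subgraphs of G, each with k-1 edges, with |α| ≥ β·m where m = |E(G)|. Iteratively, while there exists a vertex y lying in fewer than γ·deg(y) members of the current family, remove all members containing y (each vertex is processed at most once). If γ = β/4, the final family α* has size at least (β/2)·m. -/
import Mathlib


open Finset SimpleGraph

/-- Sparsification: let `α` be a family of pairwise edge-disjoint subgraphs of `G`
(each given by its edge set, of size `k-1`) with `|α| ≥ β·m`.  Iteratively (for
`i = 0, …, r-1`), a vertex `y i` lying in fewer than `γ·deg(y i)` members of the
current family `F i` is chosen (each vertex at most once) and all members containing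
it are removed.  If `γ = β/4`, the final family `F r` has size at least `(β/2)·m`. -/
theorem sparsification_keeps_half
    {V : Type*} [Fintype V] [DecidableEq V] (G : SimpleGraph V) [DecidableRel G.Adj]
    (k : ℕ) (β γ : ℝ) (hβ : 0 ≤ β) (hγ : γ = β / 4)
    (α : Finset (Finset (Sym2 V)))
    (hsub : ∀ c ∈ α, c ⊆ G.edgeFinset ∧ c.card = k - 1)
    (hdisj : ∀ c ∈ α, ∀ d ∈ α, c ≠ d → Disjoint c d)
    (hsize : β * G.edgeFinset.card ≤ (α.card : ℝ))
    (r : ℕ) (y : ℕ → V) (hy : ∀ i < r, ∀ j < r, y i = y j → i = j)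
    (F : ℕ → Finset (Finset (Sym2 V))) (hF0 : F 0 = α)
    (hstep : ∀ i < r,
      (((F i).filter (fun c => ∃ e ∈ c, y i ∈ e)).card : ℝ) < γ * G.degree (y i) ∧
      F (i + 1) = (F i).filter (fun c => ∀ e ∈ c, y i ∉ e)) :
    β / 2 * G.edgeFinset.card ≤ ((F r).card : ℝ) := by
  have hγ0 : 0 ≤ γ := by rw [hγ]; linarith
  -- main induction: α.card ≤ F n + γ * Σ_{i<n} deg (y i)
  have key : ∀ n ≤ r, (α.card : ℝ) ≤ (F n).card +
      γ * ∑ i ∈ Finset.range n, (G.degree (y i) : ℝ) := by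
    intro n hn
    induction n with
    | zero => simp [hF0]
    | succ n ih =>
      have hnr : n < r := Nat.lt_of_succ_le hn
      obtain ⟨hlt, heq⟩ := hstep n hnr
      have hsplit : (F n).card =
          ((F n).filter (fun c => ∀ e ∈ c, y n ∉ e)).card +
          ((F n).filter (fun c => ∃ e ∈ c, y n ∈ e)).card := by
        rw [← Finset.card_filter_add_card_filter_not
          (p := fun c => ∀ e ∈ c, y n ∉ e)]
        have hpred : (F n).filter (fun c => ¬ ∀ e ∈ c, y n ∉ e) =
            (F n).filter (fun c => ∃ e ∈ c, y n ∈ e) := by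
          apply Finset.filter_congr
          intro c _
          simp
        rw [hpred]
      have h1 : ((F n).card : ℝ) ≤ (F (n+1)).card + γ * G.degree (y n) := by
        rw [heq]
        push_cast [hsplit]
        linarith
      have := ih (Nat.le_of_lt hnr)
      rw [Finset.sum_range_succ]
      linarith
  have hmain := key r le_rfl
  -- bound the degree sum by 2m
  have hdeg : ∑ i ∈ Finset.range r, (G.degree (y i) : ℝ)
      ≤ 2 * G.edgeFinset.card := by
    have hinj : Set.InjOn y (Finset.range r) := by
      intro i hi j hj hij
      exact hy i (Finset.mem_range.mp hi) j (Finset.mem_range.mp hj) hij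
    have himg : ∑ v ∈ (Finset.range r).image y, (G.degree v : ℝ)
        = ∑ i ∈ Finset.range r, (G.degree (y i) : ℝ) :=
      Finset.sum_image (fun i hi j hj => hinj hi hj)
    rw [← himg]
    have h2 : ∑ v ∈ ((Finset.range r).image y), (G.degree v : ℝ)
        ≤ ∑ v ∈ (Finset.univ : Finset V), (G.degree v : ℝ) := by
      apply Finset.sum_le_sum_of_subset_of_nonneg (Finset.subset_univ _)
      intro v _ _; positivity
    have h3 : ∑ v ∈ (Finset.univ : Finset V), (G.degree v : ℝ)
        = 2 * G.edgeFinset.card := by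
      rw [← Nat.cast_sum, G.sum_degrees_eq_twice_card_edges]
      push_cast
      ring
    linarith
  have : γ * ∑ i ∈ Finset.range r, (G.degree (y i) : ℝ)
      ≤ γ * (2 * G.edgeFinset.card) := by
    apply mul_le_mul_of_nonneg_left hdeg hγ0
  have hfin : γ * (2 * (G.edgeFinset.card : ℝ)) = β / 2 * G.edgeFinset.card := by
    rw [hγ]; ring
  linarith
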